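/- arXiv:2312.03529 — 2 statements merged into one kernel-verified Lean document; each statement's English description precedes it below -/
import Mathlib

section
/- Let f : X → Y be an open and closed continuous surjection, X submetrizable, and y a non-isolated point of Y such that every hereditarily closure-preserving collection of neighbourhoods of y is finite. Then for every coarser metrizable topology σ on X, the σ-closure of f⁻¹(y) is a compact subset of (X, σ). -/
universe u v

def Submetrizable (X : Type u) [t : TopologicalSpace X] : Prop :=
  ∃ σ : TopologicalSpace X, t ≤ σ ∧ @TopologicalSpace.MetrizableSpace X σ

def HCP {Y : Type v} [TopologicalSpace Y] (𝔉 : Set (Set Y)) : Prop :=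
  ∀ G ⊆ 𝔉, ∀ B : Set Y → Set Y, (∀ F ∈ G, B F ⊆ F) →
    closure (⋃ F ∈ G, B F) = ⋃ F ∈ G, closure (B F)

/-!
If the `σ`-closure of the fibre were not compact, a sequence in it without cluster points gives,
through balls of radius `1 / (n + 1)`, a `σ`-locally finite (hence locally finite) sequence of
open sets `U n` meeting `f ⁻¹' {y}`. Their images are open neighbourhoods of `y`. Since `f` is
closed, sets `B n ⊆ f '' U n` satisfy `closure (⋃ n, B n) = ⋃ n, closure (B n)`: each `B n` is the
image of `U n ∩ f ⁻¹' B n`, and these form a locally finite family. Deleting finitely many points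
from each `f '' U n`, which is possible because `y` is not isolated, makes these neighbourhoods
pairwise distinct, so they form an infinite HCP family of neighbourhoods of `y`.
-/

open Filter Set Metric Topology TopologicalSpace

theorem IsClosed.exists_seq_forall_not_mapClusterPt {Z : Type*} [TopologicalSpace Z]
    [PseudoMetrizableSpace Z] {s : Set Z} (hs : IsClosed s) (hc : ¬IsCompact s) :
    ∃ x : ℕ → Z, (∀ n, x n ∈ s) ∧ ∀ p, ¬MapClusterPt p atTop x := by
  obtain ⟨x, hxs, hx⟩ : ∃ x : ℕ → Z, (∀ n, x n ∈ s) ∧ ∀ a ∈ s, ∀ φ : ℕ → ℕ, StrictMono φ →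
      ¬Tendsto (x ∘ φ) atTop (𝓝 a) := by
    simpa [isCompact_iff_isSeqCompact, IsSeqCompact] using hc
  refine ⟨x, hxs, fun p hp => ?_⟩
  obtain ⟨φ, hφ, hxφ⟩ := hp.tendsto_subseq
  exact hx p (hs.mem_of_tendsto hxφ (Eventually.of_forall fun n => hxs _)) φ hφ hxφ

theorem locallyFinite_ball_of_forall_not_mapClusterPt {Z : Type*} [PseudoMetricSpace Z]
    {x : ℕ → Z} {r : ℕ → ℝ} (hx : ∀ p, ¬MapClusterPt p atTop x)
    (hr : Tendsto r atTop (𝓝 0)) : LocallyFinite fun n => ball (x n) (r n) := by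
  intro p
  obtain ⟨s, hs, hxs⟩ : ∃ s ∈ 𝓝 p, ∀ᶠ n in atTop, x n ∉ s := by
    simpa [mapClusterPt_iff_frequently, not_frequently] using hx p
  obtain ⟨ε, hε, hεs⟩ := Metric.mem_nhds_iff.1 hs
  refine ⟨ball p (ε / 2), ball_mem_nhds p (half_pos hε), ?_⟩
  have hsmall : ∀ᶠ n in atTop, r n < ε / 2 := hr.eventually (gt_mem_nhds (half_pos hε))
  rw [← Nat.cofinite_eq_atTop] at hxs hsmall
  refine (eventually_cofinite.1 (hxs.and hsmall)).subset fun n ⟨q, hqx, hqp⟩ ⟨hxn, hrn⟩ => ?_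
  refine hxn (hεs ?_)
  rw [mem_ball] at hqx hqp ⊢
  calc dist (x n) p ≤ dist q (x n) + dist q p := dist_triangle_left _ _ _
    _ < ε / 2 + ε / 2 := add_lt_add (hqx.trans hrn) hqp
    _ = ε := add_halves ε

theorem exists_locallyFinite_isOpen_of_not_isCompact_closure {Z : Type*} [TopologicalSpace Z]
    [PseudoMetrizableSpace Z] {A : Set Z} (hA : ¬IsCompact (closure A)) :
    ∃ U : ℕ → Set Z, (∀ n, IsOpen (U n)) ∧ (∀ n, (U n ∩ A).Nonempty) ∧ LocallyFinite U := by
  let := pseudoMetrizableSpacePseudoMetric Z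
  obtain ⟨x, hxA, hx⟩ := isClosed_closure.exists_seq_forall_not_mapClusterPt hA
  refine ⟨fun n => ball (x n) (1 / (n + 1)), fun n => isOpen_ball, fun n => ?_,
    locallyFinite_ball_of_forall_not_mapClusterPt hx tendsto_one_div_add_atTop_nhds_zero_nat⟩
  obtain ⟨a, haA, hxa⟩ := Metric.mem_closure_iff.1 (hxA n) _ Nat.one_div_pos_of_nat
  exact ⟨a, mem_ball'.2 hxa, haA⟩

theorem LocallyFinite.of_le_topology {ι X : Type*} {t₁ t₂ : TopologicalSpace X} (h : t₁ ≤ t₂)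
    {U : ι → Set X} (hU : @LocallyFinite ι X t₂ U) : @LocallyFinite ι X t₁ U := fun x =>
  let ⟨t, ht, hfin⟩ := hU x
  ⟨t, nhds_mono h ht, hfin⟩

theorem IsClosedMap.closure_iUnion_of_subset_image {ι X Y : Type*} [TopologicalSpace X]
    [TopologicalSpace Y] {f : X → Y} (hf : Continuous f) (hcl : IsClosedMap f)
    {U : ι → Set X} (hU : LocallyFinite U) {B : ι → Set Y} (hB : ∀ i, B i ⊆ f '' U i) :
    closure (⋃ i, B i) = ⋃ i, closure (B i) := by
  set V : ι → Set X := fun i => U i ∩ f ⁻¹' B i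
  have hfV : ∀ i, f '' V i = B i := fun i => by
    rw [image_inter_preimage, inter_eq_right.2 (hB i)]
  have hV : LocallyFinite V := hU.subset fun i => inter_subset_left
  calc closure (⋃ i, B i) = f '' closure (⋃ i, V i) := by
        rw [← hcl.closure_image_eq_of_continuous hf, image_iUnion]
        simp only [hfV]
    _ = ⋃ i, closure (B i) := by
        simp only [hV.closure_iUnion, image_iUnion, ← hcl.closure_image_eq_of_continuous hf, hfV]

theorem hcp_range_of_subset_image {ι X Y : Type*} [TopologicalSpace X] [TopologicalSpace Y]
    {f : X → Y} (hf : Continuous f) (hcl : IsClosedMap f) {U : ι → Set X} (hU : LocallyFinite U)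
    {G : ι → Set Y} (hG : ∀ i, G i ⊆ f '' U i) : HCP (range G) := by
  intro 𝒢 h𝒢 B hB
  choose idx hidx using fun F : 𝒢 => h𝒢 F.2
  have hinj : Function.Injective idx := fun F₁ F₂ h =>
    Subtype.ext <| by rw [← hidx F₁, ← hidx F₂, h]
  simp only [biUnion_eq_iUnion]
  exact hcl.closure_iUnion_of_subset_image hf (hU.comp_injective hinj) fun F =>
    (hB F F.2).trans <| hidx F ▸ hG (idx F)

theorem exists_injective_forall_mem_of_infinite {α : Type*} {S : ℕ → Set α}
    (hS : ∀ n, (S n).Infinite) : ∃ w : ℕ → α, Function.Injective w ∧ ∀ n, w n ∈ S n := by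
  classical
  choose g hgS hgT using fun n (T : Finset α) => (hS n).exists_notMem_finset T
  -- `T n` collects the values `g k (T k)` chosen for `k < n`.
  let T : ℕ → Finset α := fun n => Nat.rec ∅ (fun k Tk => insert (g k Tk) Tk) n
  have hT : ∀ {k n}, k < n → g k (T k) ∈ T n := by
    intro k n hkn
    induction n with
    | zero => omega
    | succ n ih =>
      rcases Nat.lt_succ_iff_lt_or_eq.1 hkn with h | rfl
      · exact Finset.mem_insert_of_mem (ih h)
      · exact Finset.mem_insert_self _ _
  refine ⟨fun n => g n (T n), Function.Injective.of_lt_imp_ne fun k n hkn h => ?_,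
    fun n => hgS n (T n)⟩
  exact hgT n (T n) (h ▸ hT hkn)

theorem exists_infinite_hcp_nhds {X Y : Type*} [TopologicalSpace X] [TopologicalSpace Y]
    [T1Space Y] {f : X → Y} (hf : Continuous f) (hop : IsOpenMap f) (hcl : IsClosedMap f)
    {y : Y} [(𝓝[≠] y).NeBot] {U : ℕ → Set X} (hUo : ∀ n, IsOpen (U n))
    (hUy : ∀ n, (U n ∩ f ⁻¹' {y}).Nonempty) (hU : LocallyFinite U) :
    ∃ 𝔉 : Set (Set Y), HCP 𝔉 ∧ (∀ F ∈ 𝔉, F ∈ 𝓝 y) ∧ 𝔉.Infinite := by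
  have hnhds : ∀ n, f '' U n ∈ 𝓝 y := fun n =>
    let ⟨x, hxU, hxy⟩ := hUy n
    (hop _ (hUo n)).mem_nhds ⟨x, hxU, hxy⟩
  obtain ⟨w, hw_inj, hw⟩ := exists_injective_forall_mem_of_infinite fun n =>
    (infinite_of_mem_nhds y (hnhds n)).sdiff (finite_singleton y)
  set G : ℕ → Set Y := fun n => f '' U n \ w '' Iio n
  have hwG : ∀ n, w n ∈ G n := fun n =>
    ⟨(hw n).1, fun ⟨k, hk, hkn⟩ => (ne_of_lt hk) (hw_inj hkn)⟩
  refine ⟨range G, hcp_range_of_subset_image hf hcl hU fun n => sdiff_subset, ?_,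
    infinite_range_of_injective <| Function.Injective.of_lt_imp_ne fun k n hkn h => ?_⟩
  · rintro _ ⟨n, rfl⟩
    refine sdiff_mem (hnhds n) (((finite_Iio n).image w).isClosed.compl_mem_nhds ?_)
    rintro ⟨k, -, hk⟩
    exact (hw k).2 hk
  · exact (h ▸ hwG k).2 ⟨k, hkn, rfl⟩

theorem closure_fiber_isCompact_general {X : Type u} {Y : Type v}
    [tX : TopologicalSpace X] [TopologicalSpace Y] [T1Space Y]
    (f : X → Y) (hf : Continuous f)
    (hopen : IsOpenMap f) (hclosed : IsClosedMap f)
    (y : Y) (hy : (nhdsWithin y {y}ᶜ).NeBot)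
    (hHCP : ∀ 𝔉 : Set (Set Y), HCP 𝔉 → (∀ F ∈ 𝔉, F ∈ nhds y) → 𝔉.Finite) :
    ∀ σ : TopologicalSpace X, tX ≤ σ → @TopologicalSpace.MetrizableSpace X σ →
      @IsCompact X σ (@closure X σ (f ⁻¹' {y})) := by
  -- Stated before `intro σ`, after which `σ` would be the ambient topology instance.
  have hnot_locallyFinite : ∀ U : ℕ → Set X, (∀ n, IsOpen (U n)) →
      (∀ n, (U n ∩ f ⁻¹' {y}).Nonempty) → ¬LocallyFinite U := fun U hUo hUy hU =>
    have := hy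
    let ⟨𝔉, h𝔉, hnhds, hinf⟩ := exists_infinite_hcp_nhds hf hopen hclosed hUo hUy hU
    hinf (hHCP 𝔉 h𝔉 hnhds)
  intro σ hσ hσX
  by_contra hcpt
  obtain ⟨U, hUo, hUy, hU⟩ :=
    @exists_locallyFinite_isOpen_of_not_isCompact_closure X σ _ (f ⁻¹' {y}) hcpt
  exact hnot_locallyFinite U (fun n => (hUo n).mono hσ) hUy (hU.of_le_topology hσ)

/-- Let `f : X → Y` be an open-closed continuous surjection, `X` submetrizable, and `y` a
non-isolated point of `Y` such that every HCP collection of neighbourhoods of `y` is finite.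
Then the closure of the fiber `f⁻¹(y)` in every coarser metrizable topology `σ` on `X` is
compact in `(X, σ)`. -/
theorem closure_fiber_isCompact {X : Type u} {Y : Type v}
    [tX : TopologicalSpace X] [TopologicalSpace Y] [T1Space X] [T1Space Y]
    (hX : Submetrizable X)
    (f : X → Y) (hf : Continuous f) (hsurj : Function.Surjective f)
    (hopen : IsOpenMap f) (hclosed : IsClosedMap f)
    (y : Y) (hy : (nhdsWithin y {y}ᶜ).NeBot)
    (hHCP : ∀ 𝔉 : Set (Set Y), HCP 𝔉 → (∀ F ∈ 𝔉, F ∈ nhds y) → 𝔉.Finite) :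
    ∀ σ : TopologicalSpace X, tX ≤ σ → @TopologicalSpace.MetrizableSpace X σ →
      @IsCompact X σ (@closure X σ (f ⁻¹' {y})) :=
  closure_fiber_isCompact_general (tX := tX) f hf hopen hclosed y hy hHCP
end

section
/- Let f : X → Y be a closed continuous surjection from a submetrizable space X, let τ be a coarser metrizable topology on X with a σ-discrete base ⋃ₙ 𝔘ₙ, and suppose Y is countably compact. Then for every n, the family {f[U] : U ∈ 𝔘ₙ} is finite, and {f[U] : U ∈ ⋃ₙ 𝔘ₙ} is a countable almost network for Y. -/
universe u v

/-- `Y` is countably compact: every countable open cover has a finite subcover. -/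
def CountablyCompactSpace' (Y : Type v) [TopologicalSpace Y] : Prop :=
  ∀ U : ℕ → Set Y, (∀ n, IsOpen (U n)) → (⋃ n, U n) = Set.univ →
    ∃ s : Finset ℕ, (⋃ n ∈ s, U n) = Set.univ

/-- `N` is an almost network for `Y`. -/
def AlmostNetwork {Y : Type v} [TopologicalSpace Y] (N : Set (Set Y)) : Prop :=
  ∀ y : Y, ∀ V : Set Y, IsOpen V → y ∈ V → ∃ F ∈ N, y ∈ F ∧ (F \ V).Finite

/-- A family is discrete (w.r.t. a topology `τ`) if every point has a `τ`-neighbourhood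
meeting at most one member. -/
def DiscreteFamily {X : Type u} (τ : TopologicalSpace X) (𝔇 : Set (Set X)) : Prop :=
  ∀ x : X, ∃ V ∈ @nhds X τ x, {D ∈ 𝔇 | (D ∩ V).Nonempty}.Subsingleton

/-!
Pull back to the coarser metrizable topology, for which `f` is still a closed map. A countably
compact space contains no infinite set all of whose subsets are closed. If infinitely many sets
`f[U]`, `U ∈ 𝔘ₙ`, were distinct, choose distinct members with distinct points `yₖ ∈ f[Uₖ]` and
preimages `xₖ ∈ Uₖ`: every set of `xₖ`'s is closed because `𝔘ₙ` is discrete, hence every set of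
`yₖ`'s is closed. If `f[U] \ V` were infinite for every basic `U ∋ x₀` with `f x₀ = y₀ ∈ V`, choose
distinct `yₖ ∉ V` with preimages `xₖ → x₀`: then `{x₀} ∪ {xₖ : k ∈ s}` is compact, so its image
minus `V`, which is `{yₖ : k ∈ s}`, is closed for every `s`.
-/

open Set Filter Function Topology TopologicalSpace

theorem exists_injective_forall_mem {α : Type*} {T : ℕ → Set α} (hT : ∀ k, (T k).Infinite) :
    ∃ y : ℕ → α, Injective y ∧ ∀ k, y k ∈ T k := by
  classical
  choose next hnext using fun k (s : Finset α) => ((hT k).sdiff s.finite_toSet).nonempty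
  let F : ℕ → Finset α := fun k => Nat.rec ∅ (fun k s => insert (next k s) s) k
  have hF : Monotone F := monotone_nat_of_le_succ fun k => Finset.subset_insert _ _
  refine ⟨fun k => next k (F k), Injective.of_lt_imp_ne fun j k hjk h => ?_,
    fun k => (hnext k (F k)).1⟩
  exact (hnext k (F k)).2 (h ▸ hF hjk (Finset.mem_insert_self _ _))

theorem Set.Infinite.exists_injective_transversal {α : Type*} {𝒮 : Set (Set α)}
    (h𝒮 : 𝒮.Infinite) :
    ∃ (S : ℕ → Set α) (y : ℕ → α), Injective S ∧ Injective y ∧ ∀ k, S k ∈ 𝒮 ∧ y k ∈ S k := by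
  classical
  obtain ⟨p, hp, hpr⟩ := exists_seq_of_forall_finset_exists
    (fun q : Set α × α => q.1 ∈ 𝒮 ∧ q.2 ∈ q.1) (fun q q' => q.1 ≠ q'.1 ∧ q.2 ≠ q'.2)
    fun s _ => by
      have hbad : (Prod.fst '' (s : Set (Set α × α)) ∪
          {S | S ⊆ Prod.snd '' (s : Set (Set α × α))}).Finite :=
        (s.finite_toSet.image _).union (s.finite_toSet.image _).finite_subsets
      obtain ⟨S, hS𝒮, hSbad⟩ := (h𝒮.sdiff hbad).nonempty
      obtain ⟨y, hyS, hys⟩ := not_subset.1 fun h => hSbad (Or.inr h)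
      exact ⟨(S, y), ⟨hS𝒮, hyS⟩, fun q hq => ⟨fun h => hSbad (Or.inl ⟨q, hq, h⟩),
        fun h => hys ⟨q, hq, h⟩⟩⟩
  exact ⟨fun k => (p k).1, fun k => (p k).2,
    Injective.of_lt_imp_ne fun j k hjk => (hpr j k hjk).1,
    Injective.of_lt_imp_ne fun j k hjk => (hpr j k hjk).2, hp⟩

theorem Filter.Tendsto.isCompact_insert_image {X : Type*} [TopologicalSpace X] {x : ℕ → X}
    {p : X} (hx : Tendsto x atTop (𝓝 p)) (s : Set ℕ) : IsCompact (insert p (x '' s)) := by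
  rw [image_eq_range]
  exact ((Nat.cofinite_eq_atTop ▸ hx).comp
    Subtype.val_injective.tendsto_cofinite).isCompact_insert_range_of_cofinite

theorem CountablyCompactSpace'.finite_of_forall_subset_isClosed {Y : Type*} [TopologicalSpace Y]
    (hY : CountablyCompactSpace' Y) {A : Set Y} (hA : ∀ B ⊆ A, IsClosed B) : A.Finite := by
  rw [← Set.not_infinite]
  intro hinf
  set y : ℕ → Y := fun n => hinf.natEmbedding A n
  have hy : Injective y := Subtype.val_injective.comp (hinf.natEmbedding A).injective
  have hyA : ∀ s, y '' s ⊆ A := by rintro s _ ⟨n, -, rfl⟩; exact (hinf.natEmbedding A n).2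
  have hcover : ⋃ n, (y '' {n}ᶜ)ᶜ = univ := by
    refine eq_univ_of_forall fun z => mem_iUnion.2 ?_
    by_cases hz : z ∈ range y
    · obtain ⟨n, rfl⟩ := hz
      exact ⟨n, fun ⟨k, hk, hkn⟩ => hk (hy hkn)⟩
    · exact ⟨0, fun ⟨k, _, hk⟩ => hz ⟨k, hk⟩⟩
  obtain ⟨s, hs⟩ := hY _ (fun n => (hA _ (hyA _)).isOpen_compl) hcover
  obtain ⟨n, hn⟩ := s.exists_notMem
  obtain ⟨m, hm, hym⟩ := mem_iUnion₂.1 (hs ▸ mem_univ (y n))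
  exact hym ⟨n, fun h => hn (h ▸ hm), rfl⟩

section DiscreteFamily

variable {X : Type*} [t : TopologicalSpace X] {𝔇 : Set (Set X)} {ι : Type*} {U : ι → Set X}

theorem DiscreteFamily.locallyFinite (hd : DiscreteFamily t 𝔇) (hU : ∀ i, U i ∈ 𝔇)
    (hUinj : Injective U) : LocallyFinite U := fun z => by
  obtain ⟨V, hV, hsub⟩ := hd z
  exact ⟨V, hV, ((hsub.preimage hUinj).anti fun i hi => ⟨hU i, hi⟩).finite⟩

theorem DiscreteFamily.isClosed_range [T1Space X] (hd : DiscreteFamily t 𝔇)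
    (hU : ∀ i, U i ∈ 𝔇) (hUinj : Injective U) {x : ι → X} (hx : ∀ i, x i ∈ U i) :
    IsClosed (range x) := by
  rw [← iUnion_singleton_eq_range]
  exact ((hd.locallyFinite hU hUinj).subset fun i => singleton_subset_iff.2 (hx i)).isClosed_iUnion
    fun _ => isClosed_singleton

theorem DiscreteFamily.finite_image [T1Space X] {Y : Type*} [TopologicalSpace Y]
    (hY : CountablyCompactSpace' Y) {f : X → Y} (hf : IsClosedMap f) (hd : DiscreteFamily t 𝔇) :
    (image f '' 𝔇).Finite := by
  by_contra hinf
  obtain ⟨S, y, hS, hy, hmem⟩ := Set.Infinite.exists_injective_transversal hinf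
  choose U hU hUS using fun k => (hmem k).1
  choose x hxU hxy using fun k => (hUS k ▸ (hmem k).2 : y k ∈ f '' U k)
  have hUinj : Injective U := fun j k h => hS (by rw [← hUS j, ← hUS k, h])
  obtain rfl : f ∘ x = y := funext hxy
  refine infinite_range_of_injective hy (hY.finite_of_forall_subset_isClosed fun B hB => ?_)
  rw [← image_preimage_eq_of_subset hB, image_comp, image_eq_range x]
  exact hf _ (hd.isClosed_range (fun i : (f ∘ x) ⁻¹' B => hU i)
    (hUinj.comp Subtype.val_injective) fun i => hxU i)

end DiscreteFamily

theorem almostNetwork_image_of_isTopologicalBasis {X Y : Type*} [TopologicalSpace X]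
    [FirstCountableTopology X] [T2Space X] [TopologicalSpace Y] (hY : CountablyCompactSpace' Y)
    {f : X → Y} (hsurj : Surjective f) (hf : IsClosedMap f) {𝔅 : Set (Set X)}
    (hB : IsTopologicalBasis 𝔅) : AlmostNetwork (image f '' 𝔅) := by
  intro y₀ V hV hy₀
  obtain ⟨x₀, rfl⟩ := hsurj y₀
  by_contra! hinf
  obtain ⟨b, hb⟩ := (𝓝 x₀).exists_antitone_basis
  choose U hU hx₀U hUb using fun k => hB.mem_nhds_iff.1 (hb.mem k)
  obtain ⟨y, hy, hyU⟩ := exists_injective_forall_mem fun k =>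
    hinf _ (mem_image_of_mem _ (hU k)) (mem_image_of_mem f (hx₀U k))
  choose x hxU hxy using fun k => (hyU k).1
  have hx : Tendsto x atTop (𝓝 x₀) := hb.tendsto fun k => hUb k (hxU k)
  obtain rfl : f ∘ x = y := funext hxy
  refine infinite_range_of_injective hy (hY.finite_of_forall_subset_isClosed fun B hB => ?_)
  have hBeq : f '' insert x₀ (x '' ((f ∘ x) ⁻¹' B)) \ V = B := by
    rw [image_insert_eq, ← image_comp, insert_sdiff_of_mem _ hy₀,
      sdiff_eq_left.2 (disjoint_left.2 <| by rintro _ ⟨k, -, rfl⟩; exact (hyU k).2),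
      image_preimage_eq_of_subset hB]
  rw [← hBeq]
  exact (hf _ (hx.isCompact_insert_image _).isClosed).sdiff hV

theorem image_of_sigma_discrete_base_almostNetwork_general {X : Type u} {Y : Type v}
    [tX : TopologicalSpace X] [TopologicalSpace Y]
    (f : X → Y) (hsurj : Function.Surjective f)
    (hclosed : IsClosedMap f)
    (τ : TopologicalSpace X) (hτ : tX ≤ τ) (hmetr : @TopologicalSpace.MetrizableSpace X τ)
    (𝔘 : ℕ → Set (Set X))
    (hdisc : ∀ n, DiscreteFamily τ (𝔘 n))
    (hbase : @TopologicalSpace.IsTopologicalBasis X τ (⋃ n, 𝔘 n))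
    (hY : CountablyCompactSpace' Y) :
    (∀ n, {S : Set Y | ∃ U ∈ 𝔘 n, S = f '' U}.Finite) ∧
    {S : Set Y | ∃ U ∈ ⋃ n, 𝔘 n, S = f '' U}.Countable ∧
    AlmostNetwork {S : Set Y | ∃ U ∈ ⋃ n, 𝔘 n, S = f '' U} := by
  have hfτ : @IsClosedMap X Y τ _ f := fun A hA => hclosed A (hA.mono hτ)
  clear hclosed hτ tX
  have himage : ∀ 𝔇 : Set (Set X), {S : Set Y | ∃ U ∈ 𝔇, S = f '' U} = image f '' 𝔇 :=
    fun 𝔇 => by ext; simp [eq_comm]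
  have hfin : ∀ n, (image f '' 𝔘 n).Finite := fun n => (hdisc n).finite_image hY hfτ
  simp only [himage]
  refine ⟨hfin, ?_, almostNetwork_image_of_isTopologicalBasis hY hsurj hfτ hbase⟩
  rw [image_iUnion]
  exact countable_iUnion fun n => (hfin n).countable

/-- If `f : X → Y` is a closed continuous surjection from a submetrizable space, `τ` a coarser
metrizable topology on `X` with a σ-discrete base `⋃ n, 𝔘 n`, and `Y` is countably compact,
then each image family `{f[U] : U ∈ 𝔘 n}` is finite and the whole image family is a
countable almost network for `Y`. -/
theorem image_of_sigma_discrete_base_almostNetwork {X : Type u} {Y : Type v}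
    [tX : TopologicalSpace X] [TopologicalSpace Y] [T1Space X] [T1Space Y]
    (f : X → Y) (hf : Continuous f) (hsurj : Function.Surjective f)
    (hclosed : IsClosedMap f)
    (τ : TopologicalSpace X) (hτ : tX ≤ τ) (hmetr : @TopologicalSpace.MetrizableSpace X τ)
    (𝔘 : ℕ → Set (Set X))
    (hdisc : ∀ n, DiscreteFamily τ (𝔘 n))
    (hbase : @TopologicalSpace.IsTopologicalBasis X τ (⋃ n, 𝔘 n))
    (hY : CountablyCompactSpace' Y) :
    (∀ n, {S : Set Y | ∃ U ∈ 𝔘 n, S = f '' U}.Finite) ∧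
    {S : Set Y | ∃ U ∈ ⋃ n, 𝔘 n, S = f '' U}.Countable ∧
    AlmostNetwork {S : Set Y | ∃ U ∈ ⋃ n, 𝔘 n, S = f '' U} :=
  image_of_sigma_discrete_base_almostNetwork_general (tX := tX) f hsurj hclosed τ hτ hmetr 𝔘 hdisc
    hbase hY
end
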